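/- arXiv:1704.08124 — 8 statements merged into one kernel-verified Lean document; each statement's English description precedes it below -/
import Mathlib

section
/- For all real P > 5, the frequencies b_J = 2/(P+1), c_K = 0, d_Q = (P−5)/(P+1) satisfy: (i) d_Q + (1−d_Q)·c_K = (P−5)/(P+1); (ii) b_J < 2/P; and (iii) (1−c_K)·(b_J·(P+1) − 1) − 1 = 0. Moreover all three frequencies lie in [0,1]. -/
theorem stmt1 (P : ℝ) (hP : 5 < P) :
    let bJ : ℝ := 2 / (P + 1)
    let cK : ℝ := 0
    let dQ : ℝ := (P - 5) / (P + 1)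
    dQ + (1 - dQ) * cK = (P - 5) / (P + 1) ∧
    bJ < 2 / P ∧
    (1 - cK) * (bJ * (P + 1) - 1) - 1 = 0 ∧
    bJ ∈ Set.Icc (0 : ℝ) 1 ∧ cK ∈ Set.Icc (0 : ℝ) 1 ∧ dQ ∈ Set.Icc (0 : ℝ) 1 := by
  have hP0 : 0 < P := by linarith
  have hP1 : 0 < P + 1 := by linarith
  refine ⟨by ring, ?_, ?_, ⟨?_, ?_⟩, ⟨le_refl _, by norm_num⟩, ⟨?_, ?_⟩⟩
  · rw [div_lt_div_iff₀ hP1 hP0]; linarith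
  · field_simp; ring
  · positivity
  · rw [div_le_one hP1]; linarith
  · apply div_nonneg <;> linarith
  · rw [div_le_one hP1]; linarith
end

section
/- For all real P > (5+√73)/2, the frequencies b_J = 2/P, c_K = 2/(P+2), d_Q = (P²−5P−12)/(P(P+1)) satisfy: (i) d_Q + (1−d_Q)·c_K = (P−5)/(P+1); (ii) 0 ≤ c_K ≤ 1; (iii) (1−c_K)·(b_J·(P+1) − 1) − 1 = 0; and (iv) 0 < d_Q < 1. Hence Solution 3 is an equilibrium of SKP exactly when P > (5+√73)/2. -/
theorem stmt3 (P : ℝ) (hP : (5 + Real.sqrt 73) / 2 < P) :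
    let bJ : ℝ := 2 / P
    let cK : ℝ := 2 / (P + 2)
    let dQ : ℝ := (P ^ 2 - 5 * P - 12) / (P * (P + 1))
    dQ + (1 - dQ) * cK = (P - 5) / (P + 1) ∧
    0 ≤ cK ∧ cK ≤ 1 ∧
    (1 - cK) * (bJ * (P + 1) - 1) - 1 = 0 ∧
    0 < dQ ∧ dQ < 1 := by
  have hs : Real.sqrt 73 ≥ 8 := by
    rw [show (8:ℝ) = Real.sqrt 64 by rw [show (64:ℝ) = 8^2 by norm_num, Real.sqrt_sq]; norm_num]
    exact Real.sqrt_le_sqrt (by norm_num)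
  have hP6 : (6:ℝ) < P := by linarith
  have hP0 : (0:ℝ) < P := by linarith
  have h1 : (0:ℝ) < P + 1 := by linarith
  have h2 : (0:ℝ) < P + 2 := by linarith
  have hnum : 0 < P ^ 2 - 5 * P - 12 := by
    have h73 : Real.sqrt 73 ^ 2 = 73 := Real.sq_sqrt (by norm_num)
    have hlt : Real.sqrt 73 < 2 * P - 5 := by linarith
    have hsq : Real.sqrt 73 ^ 2 < (2 * P - 5) ^ 2 := by
      apply pow_lt_pow_left₀ hlt (Real.sqrt_nonneg _)
      norm_num
    nlinarith
  refine ⟨?_, ?_, ?_, ?_, ?_, ?_⟩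
  · field_simp; ring
  · positivity
  · rw [div_le_one h2]; linarith
  · field_simp; ring
  · positivity
  · rw [div_lt_one (by positivity)]
    nlinarith
end

section
/- Suppose b_J, c_K, d_Q ∈ [0,1] and P > 5 satisfy the SKP equilibrium constraints. Then d_Q + (1−d_Q)·c_K = (P−5)/(P+1), and in particular c_K ≠ 1 and d_Q ≠ 1. -/
theorem stmt4 (P bJ cK dQ : ℝ) (hP : 5 < P)
    (hbJ : bJ ∈ Set.Icc (0 : ℝ) 1) (hcK : cK ∈ Set.Icc (0 : ℝ) 1)
    (hdQ : dQ ∈ Set.Icc (0 : ℝ) 1)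
    (h1 : (dQ + (1 - dQ) * cK < (P - 5) / (P + 1) ∧ bJ = 1) ∨
          (dQ + (1 - dQ) * cK > (P - 5) / (P + 1) ∧ bJ = 0) ∨
          dQ + (1 - dQ) * cK = (P - 5) / (P + 1))
    (h2 : (bJ > 2 / P ∧ cK = 1) ∨ (bJ < 2 / P ∧ cK = 0) ∨ bJ = 2 / P)
    (h3 : ((1 - cK) * (bJ * (P + 1) - 1) - 1 > 0 ∧ dQ = 1) ∨
          ((1 - cK) * (bJ * (P + 1) - 1) - 1 < 0 ∧ dQ = 0) ∨
          (1 - cK) * (bJ * (P + 1) - 1) - 1 = 0) :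
    dQ + (1 - dQ) * cK = (P - 5) / (P + 1) ∧ cK ≠ 1 ∧ dQ ≠ 1 := by
  obtain ⟨hb0, hb1⟩ := hbJ
  obtain ⟨hc0, hc1⟩ := hcK
  obtain ⟨hd0, hd1⟩ := hdQ
  have hP0 : (0:ℝ) < P := by linarith
  have hP1 : (0:ℝ) < P + 1 := by linarith
  have hT2 : (P - 5) / (P + 1) < 1 := (div_lt_one hP1).mpr (by linarith)
  have hT1 : 0 < (P - 5) / (P + 1) := div_pos (by linarith) hP1
  have h2P : 0 < 2 / P := by positivity
  have h2P1 : 2 / P < 1 := (div_lt_one hP0).mpr (by linarith)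
  -- cK ≠ 1
  have hcK1 : cK ≠ 1 := by
    intro hc
    subst hc
    rcases h1 with ⟨hlt, hb⟩ | ⟨hgt, hb⟩ | heq
    · nlinarith
    · subst hb
      rcases h2 with ⟨hgt2, _⟩ | ⟨_, hc0'⟩ | heq2
      · linarith
      · exact one_ne_zero hc0'
      · linarith
    · nlinarith
  -- dQ ≠ 1
  have hdQ1 : dQ ≠ 1 := by
    intro hd
    subst hd
    have hE : (1:ℝ) + (1 - 1) * cK = 1 := by ring
    rcases h1 with ⟨hlt, hb⟩ | ⟨hgt, hb⟩ | heq
    · nlinarith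
    · subst hb
      rcases h3 with ⟨hg, _⟩ | ⟨_, hd0'⟩ | heq3
      · nlinarith
      · linarith
      · nlinarith
    · nlinarith
  refine ⟨?_, hcK1, hdQ1⟩
  rcases h1 with ⟨hlt, hb⟩ | ⟨hgt, hb⟩ | heq
  · subst hb
    rcases h2 with ⟨_, hc'⟩ | ⟨hlt2, _⟩ | heq2
    · exact absurd hc' hcK1
    · linarith
    · linarith
  · subst hb
    rcases h3 with ⟨hg, _⟩ | ⟨_, hd'⟩ | heq3
    · nlinarith
    · subst hd'
      rcases h2 with ⟨hgt2, _⟩ | ⟨_, hc'⟩ | heq2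
      · linarith
      · subst hc'; nlinarith
      · linarith
    · nlinarith
  · exact heq
end

section
/- Suppose b_J, c_K, d_Q ∈ [0,1] and 5 < P < (5+√73)/2 satisfy the SKP equilibrium constraints. Then the only solution with c_K = 0 is b_J = 2/(P+1), d_Q = (P−5)/(P+1). -/
theorem stmt5 (P bJ cK dQ : ℝ) (hP : 5 < P) (hPstar : P < (5 + Real.sqrt 73) / 2)
    (hbJ : bJ ∈ Set.Icc (0 : ℝ) 1) (hcK : cK ∈ Set.Icc (0 : ℝ) 1)
    (hdQ : dQ ∈ Set.Icc (0 : ℝ) 1)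
    (h1 : (dQ + (1 - dQ) * cK < (P - 5) / (P + 1) ∧ bJ = 1) ∨
          (dQ + (1 - dQ) * cK > (P - 5) / (P + 1) ∧ bJ = 0) ∨
          dQ + (1 - dQ) * cK = (P - 5) / (P + 1))
    (h2 : (bJ > 2 / P ∧ cK = 1) ∨ (bJ < 2 / P ∧ cK = 0) ∨ bJ = 2 / P)
    (h3 : ((1 - cK) * (bJ * (P + 1) - 1) - 1 > 0 ∧ dQ = 1) ∨
          ((1 - cK) * (bJ * (P + 1) - 1) - 1 < 0 ∧ dQ = 0) ∨
          (1 - cK) * (bJ * (P + 1) - 1) - 1 = 0)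
    (hc0 : cK = 0) :
    bJ = 2 / (P + 1) ∧ dQ = (P - 5) / (P + 1) := by
  subst hc0
  have hP1 : (0:ℝ) < P + 1 := by linarith
  rcases h3 with ⟨h3a, h3b⟩ | ⟨h3a, h3b⟩ | h3a
  · exfalso
    subst h3b
    have hlt : (P - 5) / (P + 1) < 1 := by rw [div_lt_one hP1]; linarith
    rcases h1 with ⟨ha, _⟩ | ⟨_, hb⟩ | hc
    · simp at ha; linarith
    · subst hb; nlinarith
    · simp at hc; linarith
  · exfalso
    subst h3b
    have hgt : 0 < (P - 5) / (P + 1) := div_pos (by linarith) hP1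
    rcases h1 with ⟨_, hb⟩ | ⟨ha, _⟩ | hc
    · subst hb; nlinarith
    · simp at ha; linarith
    · simp at hc; linarith
  · have hbJ2 : bJ = 2 / (P + 1) := by
      field_simp
      nlinarith [h3a]
    refine ⟨hbJ2, ?_⟩
    rcases h1 with ⟨_, hb⟩ | ⟨_, hb⟩ | hc
    · subst hb; nlinarith
    · subst hb; nlinarith
    · simpa using hc
end

section
/- For all P > (5+√73)/2, Player 3's expectation in Solution 3, (2P²−P−12)/(12P(P+2)), is strictly greater than her expectation in Solutions 1 and 2, (P−2)/(6(P+1)); the two are equal precisely at P = (5+√73)/2. -/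
theorem stmt9 :
    (∀ P : ℝ, (5 + Real.sqrt 73) / 2 < P →
      (P - 2) / (6 * (P + 1)) < (2 * P ^ 2 - P - 12) / (12 * P * (P + 2))) ∧
    (∀ P : ℝ, 5 < P →
      ((2 * P ^ 2 - P - 12) / (12 * P * (P + 2)) = (P - 2) / (6 * (P + 1)) ↔
        P = (5 + Real.sqrt 73) / 2)) := by
  have hs : Real.sqrt 73 ^ 2 = 73 := Real.sq_sqrt (by norm_num)
  have hs8 : (8:ℝ) < Real.sqrt 73 := by
    nlinarith [Real.sqrt_nonneg 73]
  constructor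
  · intro P hP
    have hP0 : (0:ℝ) < P := by nlinarith
    rw [div_lt_div_iff₀ (by nlinarith) (by nlinarith)]
    nlinarith [sq_nonneg (2*P - 5 - Real.sqrt 73), Real.sqrt_nonneg 73]
  · intro P hP
    rw [div_eq_div_iff (by nlinarith) (by nlinarith)]
    constructor
    · intro h
      have key : (2*P - 5 - Real.sqrt 73) * (2*P - 5 + Real.sqrt 73) = 0 := by nlinarith
      rcases mul_eq_zero.mp key with h1 | h1
      · linarith
      · nlinarith
    · intro h
      subst h
      nlinarith [hs]
end

section
/- In the ODE system b_J' = k₃ b_J(1−b_J)((P−5)/(P+1) − d_Q − c_K + d_Q c_K), c_K' = k₁ c_K(1−c_K)(b_J − 2/P), d_Q' = k₂ d_Q(1−d_Q)((c_K−2)/(P+1) + b_J(1−c_K)), with k₁,k₂,k₃ > 0 and P > 5, each of the three points S₁ = (2/(P+1), 0, (P−5)/(P+1)), S₂ = (2/P, (P−5)/(P+1), 0), and (for P > (5+√73)/2) S₃ = (2/P, 2/(P+2), (P²−5P−12)/(P(P+1))) makes all three right-hand sides vanish. -/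
noncomputable def rhsB (k3 P b c d : ℝ) : ℝ :=
  k3 * b * (1 - b) * ((P - 5) / (P + 1) - d - c + d * c)

noncomputable def rhsC (k1 P b c d : ℝ) : ℝ :=
  k1 * c * (1 - c) * (b - 2 / P)

noncomputable def rhsD (k2 P b c d : ℝ) : ℝ :=
  k2 * d * (1 - d) * ((c - 2) / (P + 1) + b * (1 - c))

theorem stmt12 (k1 k2 k3 P : ℝ) (hk1 : 0 < k1) (hk2 : 0 < k2) (hk3 : 0 < k3)
    (hP : 5 < P) :
    (rhsB k3 P (2 / (P + 1)) 0 ((P - 5) / (P + 1)) = 0 ∧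
     rhsC k1 P (2 / (P + 1)) 0 ((P - 5) / (P + 1)) = 0 ∧
     rhsD k2 P (2 / (P + 1)) 0 ((P - 5) / (P + 1)) = 0) ∧
    (rhsB k3 P (2 / P) ((P - 5) / (P + 1)) 0 = 0 ∧
     rhsC k1 P (2 / P) ((P - 5) / (P + 1)) 0 = 0 ∧
     rhsD k2 P (2 / P) ((P - 5) / (P + 1)) 0 = 0) ∧
    ((5 + Real.sqrt 73) / 2 < P →
      (rhsB k3 P (2 / P) (2 / (P + 2)) ((P ^ 2 - 5 * P - 12) / (P * (P + 1))) = 0 ∧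
       rhsC k1 P (2 / P) (2 / (P + 2)) ((P ^ 2 - 5 * P - 12) / (P * (P + 1))) = 0 ∧
       rhsD k2 P (2 / P) (2 / (P + 2)) ((P ^ 2 - 5 * P - 12) / (P * (P + 1))) = 0)) := by
  have hP0 : P ≠ 0 := by linarith
  have hP1 : P + 1 ≠ 0 := by linarith
  have hP2 : P + 2 ≠ 0 := by linarith
  refine ⟨⟨?_, ?_, ?_⟩, ⟨?_, ?_, ?_⟩, fun _ => ⟨?_, ?_, ?_⟩⟩ <;>
    simp only [rhsB, rhsC, rhsD] <;> field_simp <;> ring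
end

section
/- Suppose b_J, b_Q, c_Q, c_K, d_Q, d_K, o_K ∈ [0,1] satisfy the full one-third street Kuhn poker equilibrium constraints for some P ≥ 2. Then the case c_Q(1−d_K) + d_K + c_K(1−d_Q) + d_Q < (2P−4)/(P+1) with b_J = 1 and the case c_Q(1−d_K) + d_K + c_K(1−d_Q) + d_Q > (2P−4)/(P+1) with b_J = 0 are both impossible, so c_Q(1−d_K) + d_K + c_K(1−d_Q) + d_Q = (2P−4)/(P+1). -/
theorem stmt14 (P bJ bQ cQ cK dQ dK oK : ℝ) (hP : 2 ≤ P)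
    (hbJ : bJ ∈ Set.Icc (0 : ℝ) 1) (hbQ : bQ ∈ Set.Icc (0 : ℝ) 1)
    (hcQ : cQ ∈ Set.Icc (0 : ℝ) 1) (hcK : cK ∈ Set.Icc (0 : ℝ) 1)
    (hdQ : dQ ∈ Set.Icc (0 : ℝ) 1) (hdK : dK ∈ Set.Icc (0 : ℝ) 1)
    (hoK : oK ∈ Set.Icc (0 : ℝ) 1)
    (h1 : (cQ * (1 - dK) + dK + cK * (1 - dQ) + dQ < (2 * P - 4) / (P + 1) ∧ bJ = 1) ∨
          (cQ * (1 - dK) + dK + cK * (1 - dQ) + dQ > (2 * P - 4) / (P + 1) ∧ bJ = 0) ∨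
          cQ * (1 - dK) + dK + cK * (1 - dQ) + dQ = (2 * P - 4) / (P + 1))
    (h2 : (cK + dK < (2 * P - 4) / (P + 1) ∧ bQ = 1) ∨
          (cK + dK > (2 * P - 4) / (P + 1) ∧ bQ = 0) ∨
          cK + dK = (2 * P - 4) / (P + 1))
    (h3 : (-2 + bJ * (P - (P + 2) * oK) > 0 ∧ cQ = 1) ∨
          (-2 + bJ * (P - (P + 2) * oK) < 0 ∧ cQ = 0) ∨
          -2 + bJ * (P - (P + 2) * oK) = 0)
    (h4 : (bJ + bQ > 2 / P ∧ cK = 1) ∨ (bJ + bQ < 2 / P ∧ cK = 0) ∨ bJ + bQ = 2 / P)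
    (h5 : (cK - 2 + bJ * (1 - cK) * (P + 1) > 0 ∧ dQ = 1) ∨
          (cK - 2 + bJ * (1 - cK) * (P + 1) < 0 ∧ dQ = 0) ∨
          cK - 2 + bJ * (1 - cK) * (P + 1) = 0)
    (h6 : (cQ - 2 + bJ * (1 - cQ) * (P + 1) + bQ * (P + 1) > 0 ∧ dK = 1) ∨
          (cQ - 2 + bJ * (1 - cQ) * (P + 1) + bQ * (P + 1) < 0 ∧ dK = 0) ∨
          cQ - 2 + bJ * (1 - cQ) * (P + 1) + bQ * (P + 1) = 0)
    (h7 : (-cQ - bQ - bJ + bJ * cQ * (P + 2) > 0 ∧ oK = 1) ∨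
          (-cQ - bQ - bJ + bJ * cQ * (P + 2) < 0 ∧ oK = 0) ∨
          -cQ - bQ - bJ + bJ * cQ * (P + 2) = 0) :
    ¬(cQ * (1 - dK) + dK + cK * (1 - dQ) + dQ < (2 * P - 4) / (P + 1) ∧ bJ = 1) ∧
    ¬(cQ * (1 - dK) + dK + cK * (1 - dQ) + dQ > (2 * P - 4) / (P + 1) ∧ bJ = 0) ∧
    cQ * (1 - dK) + dK + cK * (1 - dQ) + dQ = (2 * P - 4) / (P + 1) := by
  obtain ⟨hbJ0, hbJ1⟩ := hbJ
  obtain ⟨hbQ0, hbQ1⟩ := hbQ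
  obtain ⟨hcQ0, hcQ1⟩ := hcQ
  obtain ⟨hcK0, hcK1⟩ := hcK
  obtain ⟨hdQ0, hdQ1⟩ := hdQ
  obtain ⟨hdK0, hdK1⟩ := hdK
  have hP1 : (0:ℝ) < P + 1 := by linarith
  have hP0 : (0:ℝ) < P := by linarith
  suffices hS : cQ * (1 - dK) + dK + cK * (1 - dQ) + dQ = (2 * P - 4) / (P + 1) by
    refine ⟨fun h => absurd hS (ne_of_lt h.1), fun h => absurd hS.symm (ne_of_lt h.1), hS⟩
  rcases h1 with ⟨hlt, hb1⟩ | ⟨hgt, hb0⟩ | heq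
  · -- bJ = 1, S < T : contradiction
    exfalso
    subst hb1
    have hlt' : (cQ * (1 - dK) + dK + cK * (1 - dQ) + dQ) * (P + 1) < 2 * P - 4 :=
      (lt_div_iff₀ hP1).mp hlt
    -- Claim A: P * (cK + dQ*(1-cK)) ≥ P - 1
    have hA : P - 1 ≤ P * (cK * (1 - dQ) + dQ) := by
      rcases h5 with ⟨he, hd⟩ | ⟨he, hd⟩ | he
      · subst hd; nlinarith
      · subst hd; nlinarith
      · nlinarith [mul_nonneg hdQ0 (by linarith : (0:ℝ) ≤ 1 - cK)]
    -- Claim B: P * (cQ + dK*(1-cQ)) ≥ P - 1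
    have hB : P - 1 ≤ P * (cQ * (1 - dK) + dK) := by
      rcases h6 with ⟨he, hd⟩ | ⟨he, hd⟩ | he
      · subst hd; nlinarith
      · subst hd; nlinarith [mul_nonneg hbQ0 (le_of_lt hP1)]
      · nlinarith [mul_nonneg hdK0 (by linarith : (0:ℝ) ≤ 1 - cQ),
          mul_nonneg hbQ0 (le_of_lt hP1)]
    nlinarith [mul_lt_mul_of_pos_left hlt' hP0, mul_le_mul_of_nonneg_left hA (le_of_lt hP1),
      mul_le_mul_of_nonneg_left hB (le_of_lt hP1)]
  · -- bJ = 0, S > T : contradiction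
    exfalso
    subst hb0
    have hcQz : cQ = 0 := by
      rcases h3 with ⟨he, hc⟩ | ⟨he, hc⟩ | he
      · simp at he; linarith
      · exact hc
      · simp at he
    have hdQz : dQ = 0 := by
      rcases h5 with ⟨he, hd⟩ | ⟨he, hd⟩ | he
      · simp at he; linarith
      · exact hd
      · simp at he; linarith
    subst hcQz; subst hdQz
    have hgt' : cK + dK > (2 * P - 4) / (P + 1) := by
      have := hgt; ring_nf at this ⊢; linarith
    have hbQz : bQ = 0 := by
      rcases h2 with ⟨he, hb⟩ | ⟨he, hb⟩ | he
      · linarith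
      · exact hb
      · linarith
    subst hbQz
    have hdKz : dK = 0 := by
      rcases h6 with ⟨he, hd⟩ | ⟨he, hd⟩ | he
      · simp at he; linarith
      · exact hd
      · simp at he
    subst hdKz
    have h2P : (0:ℝ) < 2 / P := by positivity
    have hcKz : cK = 0 := by
      rcases h4 with ⟨he, hc⟩ | ⟨he, hc⟩ | he
      · simp at he; linarith
      · exact hc
      · simp at he; linarith
    subst hcKz
    have hTnn : (0:ℝ) ≤ (2 * P - 4) / (P + 1) :=
      div_nonneg (by linarith) (le_of_lt hP1)
    linarith
  · exact heq
end

section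
/- For the full Kuhn game with P > 2, in Solution B (b_J = 2/P, b_Q = 0, c_K = (P−5)/(P+1), d_Q = 0, d_K = 1, o_K = 0, c_Q ∈ [0, 2/(P+4)]), the inequality required for Player 2 not to overcall with K, namely −c_Q − b_Q − b_J + b_J·c_Q·(P+2) < 0, together with the requirement that Player 2 not call with Q, holds exactly when P > (5+√73)/2 and c_Q < 2/(P+4). -/
lemma sqrt_iff_aux (P : ℝ) (hP : 2 < P) :
    (5 + Real.sqrt 73) / 2 < P ↔ 0 < P^2 - 5*P - 12 := by
  constructor
  · intro h
    have h8 : (8:ℝ) ≤ Real.sqrt 73 := by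
      rw [show (8:ℝ) = Real.sqrt 64 by
        rw [show (64:ℝ) = 8^2 by norm_num, Real.sqrt_sq (by norm_num)]]
      exact Real.sqrt_le_sqrt (by norm_num)
    have h1 : Real.sqrt 73 < 2*P - 5 := by linarith
    have h2 : (73:ℝ) < (2*P-5)^2 := (Real.sqrt_lt' (by linarith)).mp h1
    nlinarith
  · intro h
    have hpos : 0 < 2*P - 5 := by nlinarith
    have h2 : (73:ℝ) < (2*P-5)^2 := by nlinarith
    have h1 : Real.sqrt 73 < 2*P - 5 := (Real.sqrt_lt' hpos).mpr h2
    linarith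

theorem stmt16 (P cQ : ℝ) (hP : 2 < P) (hcQ : 0 ≤ cQ) :
    let bJ : ℝ := 2 / P
    let bQ : ℝ := 0
    let cK : ℝ := (P - 5) / (P + 1)
    ((-cQ - bQ - bJ + bJ * cQ * (P + 2) < 0) ∧
     (cK - 2 + bJ * (1 - cK) * (P + 1) < 0) ∧
     (cQ - 2 + bJ * (1 - cQ) * (P + 1) + bQ * (P + 1) > 0)) ↔
    ((5 + Real.sqrt 73) / 2 < P ∧ cQ < 2 / (P + 4)) := by
  intro bJ bQ cK
  have hP0 : (0:ℝ) < P := by linarith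
  have hP1 : (0:ℝ) < P + 1 := by linarith
  have hP4 : (0:ℝ) < P + 4 := by linarith
  simp only [bJ, bQ, cK]
  have key1 : (-cQ - 0 - 2/P + 2/P * cQ * (P+2) < 0) ↔ cQ*(P+4) < 2 := by
    rw [show -cQ - 0 - 2/P + 2/P * cQ * (P+2) = (cQ*(P+4) - 2)/P from by
      field_simp; ring]
    rw [div_lt_iff₀ hP0, zero_mul, sub_neg]
  have key2 : ((P-5)/(P+1) - 2 + 2/P * (1 - (P-5)/(P+1)) * (P+1) < 0) ↔
      0 < P^2 - 5*P - 12 := by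
    rw [show (P-5)/(P+1) - 2 + 2/P * (1 - (P-5)/(P+1)) * (P+1)
        = (-(P^2 - 5*P - 12))/(P*(P+1)) from by field_simp; ring]
    rw [div_lt_iff₀ (by positivity), zero_mul, neg_lt_zero]
  have key3 : (cQ - 2 + 2/P * (1 - cQ) * (P+1) + 0*(P+1) > 0) ↔ cQ*(P+2) < 2 := by
    rw [show cQ - 2 + 2/P * (1 - cQ) * (P+1) + 0*(P+1)
        = (2 - cQ*(P+2))/P from by field_simp; ring]
    rw [gt_iff_lt, lt_div_iff₀ hP0, zero_mul, sub_pos]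
  rw [key1, key2, key3, sqrt_iff_aux P hP, lt_div_iff₀ hP4]
  constructor
  · rintro ⟨h1, h2, _⟩; exact ⟨h2, h1⟩
  · rintro ⟨h2, h1⟩
    exact ⟨h1, h2, by nlinarith⟩
end
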